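/- For indeterminates X and z and any integer n ≥ 1: the sum over partitions μ of n of (X^{ℓ(μ)-1} / z_μ)(∑_{i≥1} m_i(μ) z^{i-1}) equals ∑_{i=1}^{n} h_{n-i}(1^X) z^{i-1} / i, where h_k(1^X) = C(X+k-1, k) is the polynomial continuation of the complete homogeneous symmetric function evaluated at X ones. -/

import Mathlib

open Finset

/-- Ferrers diagram of a list of row lengths: cells `(i,j)` with `i` a row index
and `j < l[i]`. -/
def diagram (l : List ℕ) : Finset (ℕ × ℕ) :=
  (Finset.range l.length).biUnion fun i => (Finset.range (l.getD i 0)).image fun j => (i, j)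

/-- `gbc l r` = `⟨λ, r⟩`: the number of `r`-element subsets of the Ferrers diagram of `l`
containing at least one cell in every row. -/
def gbc (l : List ℕ) (r : ℕ) : ℕ :=
  (((diagram l).powersetCard r).filter
    (fun S => ∀ i ∈ Finset.range l.length, ∃ c ∈ S, c.1 = i)).card

/-- `⟨λ, r⟩` for integer `r`, zero for negative `r`. -/
def gbcZ (l : List ℕ) (r : ℤ) : ℕ := if 0 ≤ r then gbc l r.toNat else 0

/-- `⟨μ, r⟩` for a partition `μ` of `n`. -/
def gbcP {n : ℕ} (μ : n.Partition) (r : ℕ) : ℕ :=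
  gbc (μ.parts.sort (· ≥ ·)) r

/-- `z_μ = ∏_{i ≥ 1} i^{m_i(μ)} m_i(μ)!`. -/
def zMu {n : ℕ} (μ : n.Partition) : ℕ :=
  ∏ i ∈ μ.parts.toFinset, i ^ μ.parts.count i * (μ.parts.count i).factorial

/-- rising factorial `(a)_s = a(a+1)⋯(a+s-1)`. -/
def asc (a s : ℕ) : ℕ := ∏ t ∈ Finset.range s, (a + t)

/-- polynomial binomial coefficient `C(x, r) = x(x-1)⋯(x-r+1)/r!`. -/
def cb (x : ℚ) (r : ℕ) : ℚ := (∏ t ∈ Finset.range r, (x - t)) / r.factorial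

/-- `h_k(1^x) = C(x+k-1, k) = x(x+1)⋯(x+k-1)/k!` as a polynomial in `x`. -/
def hp (x : ℚ) (k : ℕ) : ℚ := (∏ t ∈ Finset.range k, (x + t)) / k.factorial

/-- integer binomial coefficient with the convention `C(a,b) = 0` unless `0 ≤ b ≤ a`. -/
def bin (a b : ℤ) : ℚ := if 0 ≤ b ∧ b ≤ a then ((a.toNat).choose b.toNat : ℚ) else 0

/-- integer binomial coefficient with the additional convention `C(-1,-1) = 1`. -/
def binC (a b : ℤ) : ℚ := if a = -1 ∧ b = -1 then 1 else bin a b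

/-- unsigned Stirling numbers of the first kind:
`x(x+1)⋯(x+n-1) = ∑_k stir n k * x^k`. -/
def stir : ℕ → ℕ → ℕ
  | 0, 0 => 1
  | 0, _ + 1 => 0
  | _ + 1, 0 => 0
  | n + 1, k + 1 => n * stir n (k + 1) + stir n k

lemma zMu_pos {n : ℕ} (μ : n.Partition) : 0 < zMu μ := by
  apply Finset.prod_pos
  intro i hi
  have hi' : i ∈ μ.parts := Multiset.mem_toFinset.mp hi
  have hpos := μ.parts_pos hi'
  positivity

lemma zMu_ne_zero {n : ℕ} (μ : n.Partition) : (zMu μ : ℚ) ≠ 0 := by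
  exact_mod_cast (zMu_pos μ).ne'

def consP {m : ℕ} (i : ℕ) (hi : 0 < i) (ν : m.Partition) : (m + i).Partition :=
  ⟨i ::ₘ ν.parts, by
    intro j hj
    rcases Multiset.mem_cons.mp hj with h | h
    · exact h ▸ hi
    · exact ν.parts_pos h, by simp [ν.parts_sum, add_comm]⟩

lemma consP_parts {m : ℕ} (i : ℕ) (hi : 0 < i) (ν : m.Partition) :
    (consP i hi ν).parts = i ::ₘ ν.parts := rfl

lemma zMu_cons {m : ℕ} (i : ℕ) (hi : 0 < i) (ν : m.Partition) :
    zMu (consP i hi ν) = i * (ν.parts.count i + 1) * zMu ν := by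
  unfold zMu
  rw [consP_parts]
  set p := ν.parts with hp
  rw [Multiset.toFinset_cons]
  by_cases h : i ∈ p.toFinset
  · rw [Finset.insert_eq_self.mpr h]
    rw [← Finset.mul_prod_erase _ _ h, ← Finset.mul_prod_erase _ (fun j => j ^ p.count j * (p.count j).factorial) h]
    have hc : (i ::ₘ p).count i = p.count i + 1 := Multiset.count_cons_self i p
    have hrest : ∀ j ∈ p.toFinset.erase i,
        j ^ (i ::ₘ p).count j * ((i ::ₘ p).count j).factorial
          = j ^ p.count j * (p.count j).factorial := by
      intro j hj
      have hne : j ≠ i := (Finset.mem_erase.mp hj).1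
      rw [Multiset.count_cons_of_ne hne]
    rw [Finset.prod_congr rfl hrest, hc, pow_succ, Nat.factorial_succ]
    ring
  · rw [Finset.prod_insert h]
    have hc0 : p.count i = 0 := by
      rwa [Multiset.count_eq_zero, ← Multiset.mem_toFinset]
    have hc : (i ::ₘ p).count i = 1 := by
      rw [Multiset.count_cons_self, hc0]
    have hrest : ∀ j ∈ p.toFinset,
        j ^ (i ::ₘ p).count j * ((i ::ₘ p).count j).factorial
          = j ^ p.count j * (p.count j).factorial := by
      intro j hj
      have hne : j ≠ i := by rintro rfl; exact h hj
      rw [Multiset.count_cons_of_ne hne]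
    rw [Finset.prod_congr rfl hrest, hc, hc0]
    simp [Nat.factorial]

lemma sum_insert_bij {m : ℕ} (i : ℕ) (hi : 0 < i) (f : (m + i).Partition → ℚ)
    (hf : ∀ μ : (m + i).Partition, i ∉ μ.parts → f μ = 0) :
    ∑ μ : (m + i).Partition, f μ = ∑ ν : m.Partition, f (consP i hi ν) := by
  have h1 : ∑ μ ∈ Finset.univ.filter (fun μ : (m + i).Partition => i ∈ μ.parts), f μ
      = ∑ μ : (m + i).Partition, f μ := by
    apply Finset.sum_filter_of_ne
    intro μ _ hne
    by_contra h
    exact hne (hf μ h)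
  rw [← h1]
  have hsum : ∀ (μ : (m + i).Partition), i ∈ μ.parts → (μ.parts.erase i).sum = m := by
    intro μ h
    have h2 : i + (μ.parts.erase i).sum = m + i := by
      rw [← Multiset.sum_cons, Multiset.cons_erase h, μ.parts_sum]
    omega
  refine Finset.sum_bij' (i := fun μ hμ => (⟨μ.parts.erase i,
      fun hj => μ.parts_pos (Multiset.mem_of_mem_erase hj),
      hsum μ (by simpa using hμ)⟩ : m.Partition))
    (j := fun ν _ => consP i hi ν) ?_ ?_ ?_ ?_ ?_
  · intro μ hμ; simp
  · intro ν _
    simp [consP_parts]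
  · intro μ hμ
    apply Nat.Partition.ext
    rw [consP_parts]
    exact Multiset.cons_erase (by simpa using hμ)
  · intro ν _
    apply Nat.Partition.ext
    simp [consP_parts]
  · intro μ hμ
    congr 1
    apply Nat.Partition.ext
    rw [consP_parts]
    exact (Multiset.cons_erase (by simpa using hμ)).symm

def S (X : ℚ) (m : ℕ) : ℚ := ∑ ν : m.Partition, X ^ ν.parts.card / zMu ν

lemma key1 (i m : ℕ) (hi : 0 < i) (X : ℚ) :
    ∑ μ : (m + i).Partition, (μ.parts.count i : ℚ) * X ^ (μ.parts.card - 1) / zMu μ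
      = S X m / i := by
  rw [sum_insert_bij i hi _ (fun μ h => by simp [Multiset.count_eq_zero.mpr h]), S,
    Finset.sum_div]
  apply Finset.sum_congr rfl
  intro ν _
  have hcount : (consP i hi ν).parts.count i = ν.parts.count i + 1 := by
    rw [consP_parts]; exact Multiset.count_cons_self i ν.parts
  have hcard : (consP i hi ν).parts.card - 1 = ν.parts.card := by
    rw [consP_parts]; simp
  rw [hcard, zMu_cons, hcount]
  have h1 : ((ν.parts.count i : ℚ) + 1) ≠ 0 := by positivity
  have h2 : (i : ℚ) ≠ 0 := by positivity
  have h3 := zMu_ne_zero ν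
  push_cast
  field_simp

lemma key2 (i m : ℕ) (hi : 0 < i) (X : ℚ) :
    ∑ μ : (m + i).Partition, (μ.parts.count i : ℚ) * X ^ μ.parts.card / zMu μ
      = X * S X m / i := by
  rw [sum_insert_bij i hi _ (fun μ h => by simp [Multiset.count_eq_zero.mpr h]), S]
  rw [Finset.mul_sum, Finset.sum_div]
  apply Finset.sum_congr rfl
  intro ν _
  have hcount : (consP i hi ν).parts.count i = ν.parts.count i + 1 := by
    rw [consP_parts]; exact Multiset.count_cons_self i ν.parts
  have hcard : (consP i hi ν).parts.card = ν.parts.card + 1 := by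
    rw [consP_parts]; simp
  rw [hcard, zMu_cons, hcount]
  have h1 : ((ν.parts.count i : ℚ) + 1) ≠ 0 := by positivity
  have h2 : (i : ℚ) ≠ 0 := by positivity
  have h3 := zMu_ne_zero ν
  push_cast
  rw [pow_succ]
  field_simp
lemma hp_succ (X : ℚ) (m : ℕ) : ((m : ℚ) + 1) * hp X (m + 1) = (X + m) * hp X m := by
  unfold hp
  rw [Finset.prod_range_succ, Nat.factorial_succ]
  have h1 : (m.factorial : ℚ) ≠ 0 := by exact_mod_cast m.factorial_ne_zero
  have h2 : ((m : ℚ) + 1) ≠ 0 := by positivity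
  push_cast
  field_simp

lemma hp_rec (X : ℚ) (m : ℕ) : (m : ℚ) * hp X m = X * ∑ k ∈ Finset.range m, hp X k := by
  induction m with
  | zero => simp
  | succ m ih =>
    rw [Finset.sum_range_succ, mul_add, ← ih]
    push_cast
    linear_combination hp_succ X m

lemma parts_zero (μ : (0 : ℕ).Partition) : μ.parts = 0 := by
  rw [Multiset.eq_zero_iff_forall_notMem]
  intro a ha
  have h1 := μ.parts_pos ha
  have h2 : a ≤ μ.parts.sum := Multiset.single_le_sum (fun x _ => Nat.zero_le x) a ha
  rw [μ.parts_sum] at h2; omega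

lemma S_zero (X : ℚ) : S X 0 = 1 := by
  have hne : (⟨0, by simp, by simp⟩ : (0 : ℕ).Partition) ∈
      (Finset.univ : Finset (0 : ℕ).Partition) := Finset.mem_univ _
  have huniq : ∀ μ ν : (0 : ℕ).Partition, μ = ν := fun μ ν =>
    Nat.Partition.ext (by rw [parts_zero, parts_zero])
  rw [S, Finset.sum_eq_single_of_mem _ hne (fun b _ hb => absurd (huniq b _) hb)]
  simp [zMu, parts_zero]

lemma toFinset_subset_Icc {n : ℕ} (μ : n.Partition) :
    μ.parts.toFinset ⊆ Finset.Icc 1 n := by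
  intro a ha
  have ha' : a ∈ μ.parts := Multiset.mem_toFinset.mp ha
  have h1 := μ.parts_pos ha'
  have h2 : a ≤ μ.parts.sum := Multiset.single_le_sum (fun x _ => Nat.zero_le x) a ha'
  rw [μ.parts_sum] at h2
  exact Finset.mem_Icc.mpr ⟨h1, h2⟩

lemma count_sum {n : ℕ} (μ : n.Partition) (f : ℕ → ℚ) :
    (μ.parts.map f).sum = ∑ i ∈ Finset.Icc 1 n, (μ.parts.count i : ℚ) * f i := by
  rw [Finset.sum_multiset_map_count]
  rw [Finset.sum_subset (toFinset_subset_Icc μ)]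
  · exact Finset.sum_congr rfl fun i _ => by rw [nsmul_eq_mul]
  · intro i _ hi
    rw [Multiset.count_eq_zero.mpr (fun h => hi (Multiset.mem_toFinset.mpr h))]
    simp

lemma reindex_sum (m : ℕ) (g : ℕ → ℚ) :
    ∑ i ∈ Finset.Icc 1 m, g (m - i) = ∑ k ∈ Finset.range m, g k := by
  refine Finset.sum_bij' (i := fun i _ => m - i) (j := fun k _ => m - k) ?_ ?_ ?_ ?_ ?_
  · intro a ha
    rw [Finset.mem_Icc] at ha
    show m - a ∈ Finset.range m
    rw [Finset.mem_range]; omega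
  · intro a ha
    rw [Finset.mem_range] at ha
    show m - a ∈ Finset.Icc 1 m
    rw [Finset.mem_Icc]; omega
  · intro a ha; rw [Finset.mem_Icc] at ha; show m - (m - a) = a; omega
  · intro a ha; rw [Finset.mem_range] at ha; show m - (m - a) = a; omega
  · intro a _; rfl

lemma key2' (i m : ℕ) (hi : 0 < i) (him : i ≤ m) (X : ℚ) :
    ∑ μ : m.Partition, (μ.parts.count i : ℚ) * X ^ μ.parts.card / zMu μ
      = X * S X (m - i) / i := by
  have h := key2 i (m - i) hi X
  have hm : m - i + i = m := by omega
  rw [hm] at h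
  exact h

lemma key1' (i m : ℕ) (hi : 0 < i) (him : i ≤ m) (X : ℚ) :
    ∑ μ : m.Partition, (μ.parts.count i : ℚ) * X ^ (μ.parts.card - 1) / zMu μ
      = S X (m - i) / i := by
  have h := key1 i (m - i) hi X
  have hm : m - i + i = m := by omega
  rw [hm] at h
  exact h

lemma S_rec (X : ℚ) (m : ℕ) :
    (m : ℚ) * S X m = X * ∑ k ∈ Finset.range m, S X k := by
  have hμm : ∀ μ : m.Partition,
      (m : ℚ) = ∑ i ∈ Finset.Icc 1 m, (μ.parts.count i : ℚ) * i := by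
    intro μ
    rw [← count_sum μ (fun a => (a : ℚ))]
    conv_lhs => rw [← μ.parts_sum]
    simp
  calc (m : ℚ) * S X m
      = ∑ μ : m.Partition, ∑ i ∈ Finset.Icc 1 m,
          ((μ.parts.count i : ℚ) * i) * (X ^ μ.parts.card / zMu μ) := by
        rw [S, Finset.mul_sum]
        refine Finset.sum_congr rfl fun μ _ => ?_
        rw [← Finset.sum_mul, ← hμm μ]
    _ = ∑ i ∈ Finset.Icc 1 m, (i : ℚ) * ∑ μ : m.Partition,
          (μ.parts.count i : ℚ) * X ^ μ.parts.card / zMu μ := by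
        rw [Finset.sum_comm]
        refine Finset.sum_congr rfl fun i _ => ?_
        rw [Finset.mul_sum]
        refine Finset.sum_congr rfl fun μ _ => ?_
        ring
    _ = ∑ i ∈ Finset.Icc 1 m, (i : ℚ) * (X * S X (m - i) / i) := by
        refine Finset.sum_congr rfl fun i hi => ?_
        rw [Finset.mem_Icc] at hi
        rw [key2' i m hi.1 hi.2]
    _ = X * ∑ i ∈ Finset.Icc 1 m, S X (m - i) := by
        rw [Finset.mul_sum]
        refine Finset.sum_congr rfl fun i hi => ?_
        rw [Finset.mem_Icc] at hi
        have h0 : (i : ℚ) ≠ 0 := by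
          have := hi.1; positivity
        field_simp
    _ = X * ∑ k ∈ Finset.range m, S X k := by rw [reindex_sum]

lemma S_eq_hp (X : ℚ) (m : ℕ) : S X m = hp X m := by
  induction m using Nat.strong_induction_on with
  | _ m ih =>
    rcases Nat.eq_zero_or_pos m with rfl | hm
    · rw [S_zero]; simp [hp]
    · have h3 : ∑ k ∈ Finset.range m, S X k = ∑ k ∈ Finset.range m, hp X k :=
        Finset.sum_congr rfl fun k hk => ih k (Finset.mem_range.mp hk)
      have hm' : (m : ℚ) ≠ 0 := by exact_mod_cast hm.ne'
      have h4 : (m : ℚ) * S X m = (m : ℚ) * hp X m := by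
        rw [S_rec, h3, ← hp_rec]
      exact mul_left_cancel₀ hm' h4

theorem stmt13 (n : ℕ) (hn : 1 ≤ n) (X z : ℚ) :
    ∑ μ : n.Partition, X ^ (μ.parts.card - 1) / zMu μ
        * (μ.parts.map fun a => z ^ (a - 1)).sum
      = ∑ i ∈ Finset.Icc 1 n, hp X (n - i) * z ^ (i - 1) / i := by
  calc ∑ μ : n.Partition, X ^ (μ.parts.card - 1) / zMu μ
        * (μ.parts.map fun a => z ^ (a - 1)).sum
      = ∑ μ : n.Partition, ∑ i ∈ Finset.Icc 1 n,
          z ^ (i - 1) * ((μ.parts.count i : ℚ) * X ^ (μ.parts.card - 1) / zMu μ) := by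
        refine Finset.sum_congr rfl fun μ _ => ?_
        rw [count_sum μ (fun a => z ^ (a - 1)), Finset.mul_sum]
        refine Finset.sum_congr rfl fun i _ => ?_
        ring
    _ = ∑ i ∈ Finset.Icc 1 n, z ^ (i - 1) * ∑ μ : n.Partition,
          (μ.parts.count i : ℚ) * X ^ (μ.parts.card - 1) / zMu μ := by
        rw [Finset.sum_comm]
        refine Finset.sum_congr rfl fun i _ => ?_
        rw [Finset.mul_sum]
    _ = ∑ i ∈ Finset.Icc 1 n, hp X (n - i) * z ^ (i - 1) / i := by
        refine Finset.sum_congr rfl fun i hi => ?_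
        rw [Finset.mem_Icc] at hi
        rw [key1' i n hi.1 hi.2, S_eq_hp]
        ring
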